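/- Let ω : ℝ → ℝ be continuous, let x : ℝ → ℝ satisfy x'' + ω(t)²·x = 0, and let ρ : ℝ → ℝ be strictly positive, twice differentiable, and satisfy ρ'' + ω(t)²·ρ = 1/ρ³. Define the new time variable T(t) = ∫₀ᵗ ρ(s)⁻² ds and Q(t) = x(t)/ρ(t). Then Q, viewed as a function of T (i.e., writing Q(t) = q(T(t)) for a twice differentiable q), satisfies the autonomous harmonic oscillator equation q''(T) + q(T) = 0. -/

import Mathlib

/-!
Differentiating `q (T t) = x t / ρ t` once, with `T' = ρ⁻²`, gives `q'(T) = x' ρ - x ρ'`, the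
Wronskian of `x` and `ρ`. Differentiating again, `q''(T) ρ⁻² = x'' ρ - x ρ''`, and the two
equations make the `ω²` terms cancel: `x'' ρ - x ρ'' = -x / ρ³`, i.e. `q''(T) = -x / ρ = -q(T)`.
-/

theorem deriv_eq_div_of_comp_eq {g T F : ℝ → ℝ} {t T' F' : ℝ}
    (hg : DifferentiableAt ℝ g (T t)) (hT : HasDerivAt T T' t) (hT' : T' ≠ 0)
    (hF : HasDerivAt F F' t) (hgT : ∀ u, g (T u) = F u) :
    deriv g (T t) = F' / T' := by
  have hcomp : HasDerivAt (fun u => g (T u)) (deriv g (T t) * T') t := hg.hasDerivAt.comp t hT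
  rw [funext hgT] at hcomp
  exact eq_div_of_mul_eq hT' (hcomp.unique hF)

theorem hasDerivAt_wronskian {x ρ : ℝ → ℝ} {t : ℝ}
    (hx : DifferentiableAt ℝ x t) (hx' : DifferentiableAt ℝ (deriv x) t)
    (hρ : DifferentiableAt ℝ ρ t) (hρ' : DifferentiableAt ℝ (deriv ρ) t) :
    HasDerivAt (fun u => deriv x u * ρ u - x u * deriv ρ u)
      (deriv (deriv x) t * ρ t - x t * deriv (deriv ρ) t) t :=
  ((hx'.hasDerivAt.mul hρ.hasDerivAt).sub (hx.hasDerivAt.mul hρ'.hasDerivAt)).congr_deriv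
    (by ring)

theorem stmt2_general (ω x ρ : ℝ → ℝ)
    (hx : Differentiable ℝ x) (hx' : Differentiable ℝ (deriv x))
    (hxeq : ∀ t, deriv (deriv x) t + ω t ^ 2 * x t = 0)
    (hρpos : ∀ t, 0 < ρ t)
    (hρ : Differentiable ℝ ρ) (hρ' : Differentiable ℝ (deriv ρ))
    (hρeq : ∀ t, deriv (deriv ρ) t + ω t ^ 2 * ρ t = 1 / ρ t ^ 3)
    (T : ℝ → ℝ) (hT : ∀ t, T t = ∫ s in (0:ℝ)..t, (ρ s) ⁻¹ ^ 2)
    (q : ℝ → ℝ) (hq : Differentiable ℝ q) (hq' : Differentiable ℝ (deriv q))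
    (hQ : ∀ t, x t / ρ t = q (T t)) :
    ∀ t, deriv (deriv q) (T t) + q (T t) = 0 := by
  have hρne : ∀ t, ρ t ≠ 0 := fun t => (hρpos t).ne'
  have hT' : ∀ t, HasDerivAt T ((ρ t)⁻¹ ^ 2) t := fun t => by
    rw [funext hT]
    exact (((hρ.continuous.inv₀ hρne).pow 2).integral_hasStrictDerivAt 0 t).hasDerivAt
  have hT'ne : ∀ t, (ρ t)⁻¹ ^ 2 ≠ 0 := fun t => pow_ne_zero 2 (inv_ne_zero (hρne t))
  have hdq : ∀ t, deriv q (T t) = deriv x t * ρ t - x t * deriv ρ t := fun t => by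
    rw [deriv_eq_div_of_comp_eq (hq _) (hT' t) (hT'ne t)
      ((hx t).hasDerivAt.div (hρ t).hasDerivAt (hρne t)) fun u => (hQ u).symm]
    field_simp [hρne t]
  intro t
  rw [deriv_eq_div_of_comp_eq (hq' _) (hT' t) (hT'ne t)
    (hasDerivAt_wronskian (hx t) (hx' t) (hρ t) (hρ' t)) hdq, ← hQ t]
  have hW : deriv (deriv x) t * ρ t - x t * deriv (deriv ρ) t = -(x t / ρ t ^ 3) := by
    linear_combination ρ t * hxeq t - x t * hρeq t
  rw [hW]
  field_simp [hρne t]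
  ring

/-- The transformation `Q = x/ρ`, `T = ∫ ρ⁻²` maps the nonautonomous oscillator
`x'' + ω(t)² x = 0` to the autonomous harmonic oscillator `q'' + q = 0`, where
`ρ > 0` solves the Ermakov–Pinney equation `ρ'' + ω² ρ = 1/ρ³`. -/
theorem stmt2 (ω x ρ : ℝ → ℝ) (hω : Continuous ω)
    (hx : Differentiable ℝ x) (hx' : Differentiable ℝ (deriv x))
    (hxeq : ∀ t, deriv (deriv x) t + ω t ^ 2 * x t = 0)
    (hρpos : ∀ t, 0 < ρ t)
    (hρ : Differentiable ℝ ρ) (hρ' : Differentiable ℝ (deriv ρ))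
    (hρeq : ∀ t, deriv (deriv ρ) t + ω t ^ 2 * ρ t = 1 / ρ t ^ 3)
    (T : ℝ → ℝ) (hT : ∀ t, T t = ∫ s in (0:ℝ)..t, (ρ s) ⁻¹ ^ 2)
    (q : ℝ → ℝ) (hq : Differentiable ℝ q) (hq' : Differentiable ℝ (deriv q))
    (hQ : ∀ t, x t / ρ t = q (T t)) :
    ∀ t, deriv (deriv q) (T t) + q (T t) = 0 :=
  stmt2_general ω x ρ hx hx' hxeq hρpos hρ hρ' hρeq T hT q hq hq' hQ
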